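/- Let G be a finite simple connected graph on n vertices with Laplacian L whose eigenvalues are 0 = σ₁ ≤ σ₂ ≤ … ≤ σₙ, and let M be the Moore–Penrose pseudoinverse of L. Then R_tot = n · tr(M) = n · Σ_{i=2}^{n} 1/σ_i. -/

import Mathlib

open Matrix Finset

/-- `M` is the Moore–Penrose pseudoinverse of `S`: `S M S = S`, `M S M = M`, and both `S M`
and `M S` are symmetric. -/
def IsMoorePenrose {n : Type*} [Fintype n] (S M : Matrix n n ℝ) : Prop :=
  S * M * S = S ∧ M * S * M = M ∧ (S * M).IsSymm ∧ (M * S).IsSymm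

/-- The effective resistance `R_{u,v} = (1_u − 1_v)ᵀ (L + (1/n)J)⁻¹ (1_u − 1_v)`. -/
noncomputable def effRes {V : Type*} [Fintype V] [DecidableEq V] (G : SimpleGraph V)
    [DecidableRel G.Adj] (u v : V) : ℝ :=
  (Pi.single u 1 - Pi.single v 1) ⬝ᵥ
    ((G.lapMatrix ℝ + ((Fintype.card V : ℝ))⁻¹ • Matrix.of (fun _ _ : V => (1 : ℝ)))⁻¹ *ᵥ
      (Pi.single u 1 - Pi.single v 1))

/-- The total resistance `R_tot`: the sum of `R_{u,v}` over unordered pairs of distinct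
vertices, i.e. half the sum over ordered pairs of distinct vertices. -/
noncomputable def totalRes {V : Type*} [Fintype V] [DecidableEq V] (G : SimpleGraph V)
    [DecidableRel G.Adj] : ℝ :=
  (∑ p ∈ Finset.univ.offDiag, effRes G p.1 p.2) / 2

/-!
Let `P = J / n`, the orthogonal projection onto the constant vectors. For connected `G` these span
the kernel of `L`, so `L + P` is invertible and `(L + P)⁻¹ - P` satisfies the Penrose equations;
by uniqueness it is `M`. As `P (1_u - 1_v) = 0`, this gives `R_{u,v} = M_uu - M_uv - M_vu + M_vv`,
and since the rows and columns of `M` sum to zero, the sum over all pairs is `2 n tr M`.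
On the other hand `M = f(L)` for `f(x) = x⁻¹` (with `0⁻¹ = 0`), whose trace is the sum of the
inverted eigenvalues; the least eigenvalue `σ₁` of the singular `L ≥ 0` is `0` and contributes
nothing.
-/

namespace IsMoorePenrose

variable {n : Type*} [Fintype n] {S M M' P : Matrix n n ℝ}

theorem unique (h : IsMoorePenrose S M) (h' : IsMoorePenrose S M') : M = M' := by
  obtain ⟨h1, h2, h3, h4⟩ := h
  obtain ⟨h1', h2', h3', h4'⟩ := h'
  have hSM : S * M = S * M' :=
    calc S * M = (S * M') * (S * M) := by rw [← mul_assoc, h1']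
      _ = ((S * M) * (S * M'))ᵀ := by rw [transpose_mul, h3.eq, h3'.eq]
      _ = S * M' := by rw [← mul_assoc, h1, h3'.eq]
  have hMS : M * S = M' * S :=
    calc M * S = (M * S) * (M' * S) := by rw [mul_assoc, ← mul_assoc S, h1']
      _ = ((M' * S) * (M * S))ᵀ := by rw [transpose_mul, h4.eq, h4'.eq]
      _ = M' * S := by rw [mul_assoc, ← mul_assoc S, h1, h4'.eq]
  calc M = M * S * M := h2.symm
    _ = M' * (S * M') := by rw [hMS, mul_assoc, hSM]
    _ = M' := by rw [← mul_assoc, h2']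

/-- Since `(S M)ᵀ = S M`, the pseudoinverse factors as `M = M Mᵀ S`. -/
theorem mul_eq_zero_of_mul_eq_zero (h : IsMoorePenrose S M) (hS : S.IsSymm)
    (hSP : S * P = 0) : M * P = 0 := by
  have hM : M = M * Mᵀ * S := by
    conv_lhs => rw [← h.2.1, mul_assoc, ← h.2.2.1.eq, transpose_mul, hS.eq, ← mul_assoc]
  rw [hM, mul_assoc, hSP, mul_zero]

theorem mul_eq_zero_of_mul_eq_zero' (h : IsMoorePenrose S M) (hS : S.IsSymm)
    (hPS : P * S = 0) : P * M = 0 := by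
  have hM : M = S * Mᵀ * M := by
    conv_lhs => rw [← h.2.1, ← h.2.2.2.eq, transpose_mul, hS.eq]
  rw [hM, ← mul_assoc, ← mul_assoc, hPS, zero_mul, zero_mul]

end IsMoorePenrose

namespace Matrix

section Projection

variable {n : Type*} [Fintype n] [DecidableEq n] {S P : Matrix n n ℝ}

theorem isUnit_add_of_forall_mulVec_eq_zero (hPS : P * S = 0) (hPP : P * P = P)
    (hker : ∀ x, S *ᵥ x = 0 → P *ᵥ x = x) : IsUnit (S + P) := by
  refine mulVec_injective_iff_isUnit.mp <| (injective_iff_map_eq_zero (S + P).mulVecLin).mpr ?_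
  intro x hx
  change (S + P) *ᵥ x = 0 at hx
  have hPx : P *ᵥ x = 0 := by
    have hPB : P * (S + P) = P := by rw [mul_add, hPS, hPP, zero_add]
    rw [← hPB, ← mulVec_mulVec, hx, mulVec_zero]
  have hSx : S *ᵥ x = 0 := by rwa [add_mulVec, hPx, add_zero] at hx
  rw [← hker x hSx, hPx]

theorem isMoorePenrose_inv_add_sub (hP : P.IsSymm) (hPP : P * P = P) (hSP : S * P = 0)
    (hPS : P * S = 0) (hB : IsUnit (S + P)) : IsMoorePenrose S ((S + P)⁻¹ - P) := by
  set B := S + P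
  have hBdet : IsUnit B.det := (isUnit_iff_isUnit_det B).mp hB
  have hBP : B * P = P := by rw [add_mul, hSP, hPP, zero_add]
  have hPB : P * B = P := by rw [mul_add, hPS, hPP, zero_add]
  have hBiP : B⁻¹ * P = P := by
    rw [← hBP, ← mul_assoc, nonsing_inv_mul B hBdet, one_mul, hBP]
  have hPBi : P * B⁻¹ = P := by
    rw [← hPB, mul_assoc, mul_nonsing_inv B hBdet, mul_one, hPB]
  have hS : S = B - P := (add_sub_cancel_right S P).symm
  have hSM : S * (B⁻¹ - P) = 1 - P := by
    rw [hS, sub_mul, mul_sub, mul_sub, mul_nonsing_inv B hBdet, hBP, hPBi, hPP]; abel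
  have hMS : (B⁻¹ - P) * S = 1 - P := by
    rw [hS, sub_mul, mul_sub, mul_sub, nonsing_inv_mul B hBdet, hBiP, hPB, hPP]; abel
  have hsymm : (1 - P).IsSymm := isSymm_one.sub hP
  refine ⟨?_, ?_, hSM ▸ hsymm, hMS ▸ hsymm⟩
  · rw [hSM, sub_mul, one_mul, hPS, sub_zero]
  · rw [hMS, sub_mul, one_mul, mul_sub, hPBi, hPP, sub_self, sub_zero]

end Projection

section QuadraticForm

variable {n : Type*} [Fintype n]

theorem single_sub_single_dotProduct_mulVec [DecidableEq n] {R : Type*} [CommRing R]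
    (N : Matrix n n R) (u v : n) :
    (Pi.single u 1 - Pi.single v 1) ⬝ᵥ (N *ᵥ (Pi.single u 1 - Pi.single v 1)) =
      N u u - N u v - N v u + N v v := by
  simp only [mulVec_sub, sub_dotProduct, dotProduct_sub, mulVec_single_one, single_one_dotProduct,
    col_apply]
  ring

theorem sum_sum_sub_sub_add_eq_card_mul_trace {R : Type*} [CommRing R] (N : Matrix n n R)
    (hrow : ∀ u, ∑ v, N u v = 0) (hcol : ∀ v, ∑ u, N u v = 0) :
    ∑ u, ∑ v, (N u u - N u v - N v u + N v v) = 2 * Fintype.card n * N.trace := by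
  simp only [sum_add_distrib, sum_sub_distrib, hrow, hcol, sum_const, card_univ, nsmul_eq_mul,
    ← mul_sum, trace, diag_apply]
  ring

end QuadraticForm

end Matrix

namespace Matrix.IsHermitian

variable {n : Type*} [Fintype n] [DecidableEq n]

theorem trace_cfc {𝕜 : Type*} [RCLike 𝕜] {A : Matrix n n 𝕜} (hA : A.IsHermitian) (f : ℝ → ℝ) :
    (cfc f A).trace = ∑ i, (f (hA.eigenvalues i) : 𝕜) := by
  rw [hA.cfc_eq, IsHermitian.cfc, Unitary.conjStarAlgAut_apply, trace_mul_cycle,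
    Unitary.coe_star_mul_self, one_mul, trace_diagonal]
  rfl

variable {A M : Matrix n n ℝ}

/-- With the convention `0⁻¹ = 0`, inverting the eigenvalues pseudo-inverts `A`. -/
theorem isMoorePenrose_cfc_inv (hA : A.IsHermitian) :
    IsMoorePenrose A (cfc (·⁻¹ : ℝ → ℝ) A) := by
  have hcont (f : ℝ → ℝ) : ContinuousOn f (spectrum ℝ A) := A.finite_real_spectrum.continuousOn f
  have hA' : IsSelfAdjoint A := hA
  have hid : cfc (fun x : ℝ => x) A = A := cfc_id' ℝ A
  have hmul (f g : ℝ → ℝ) : cfc f A * cfc g A = cfc (fun x => f x * g x) A :=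
    (cfc_mul f g A (hcont f) (hcont g)).symm
  have hmul_left (f : ℝ → ℝ) : A * cfc f A = cfc (fun x => x * f x) A := by
    simpa only [hid] using hmul (fun x => x) f
  have hmul_right (f : ℝ → ℝ) : cfc f A * A = cfc (fun x => f x * x) A := by
    simpa only [hid] using hmul f (fun x => x)
  have hsymm (f : ℝ → ℝ) : (cfc f A).IsSymm := isHermitian_iff_isSymm.mp IsSelfAdjoint.cfc
  refine ⟨?_, ?_, ?_, ?_⟩
  · simpa only [hmul_left, hmul_right, mul_inv_mul_cancel] using hid
  · have hinv (x : ℝ) : x⁻¹ * x * x⁻¹ = x⁻¹ := by simpa using mul_inv_mul_cancel x⁻¹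
    simp only [hmul_right, hmul, hinv]
  · rw [hmul_left]
    exact hsymm _
  · rw [hmul_right]
    exact hsymm _

theorem trace_eq_sum_inv_eigenvalues (hA : A.IsHermitian) (hM : IsMoorePenrose A M) :
    M.trace = ∑ i, (hA.eigenvalues i)⁻¹ := by
  rw [hM.unique hA.isMoorePenrose_cfc_inv, hA.trace_cfc]
  rfl

end Matrix.IsHermitian

theorem Matrix.PosSemidef.sum_inv_eigenvalues_eq_sum_filter_ne_zero {n : Type*} [Fintype n]
    [DecidableEq n] {A : Matrix n n ℝ} (hA : A.PosSemidef) (hsing : ¬IsUnit A) {k : ℕ}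
    (σ : Fin k → ℝ) (hmono : Monotone σ) (e : n ≃ Fin k)
    (hσ : ∀ w, hA.isHermitian.eigenvalues w = σ (e w)) :
    ∑ w, (hA.isHermitian.eigenvalues w)⁻¹ =
      ∑ i ∈ univ.filter (fun i : Fin k => (i : ℕ) ≠ 0), (σ i)⁻¹ := by
  have hσ_zero (i : Fin k) (hi : (i : ℕ) = 0) : σ i = 0 := by
    obtain ⟨w, hw⟩ : 0 ∈ Set.range hA.isHermitian.eigenvalues := by
      rw [← hA.isHermitian.spectrum_real_eq_range_eigenvalues]
      exact (spectrum.zero_mem_iff ℝ).mpr hsing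
    refine le_antisymm ?_ ?_
    · exact (hmono (Fin.le_def.mpr (hi ▸ Nat.zero_le _))).trans (hw ▸ hσ w).ge
    · simpa only [hσ, e.apply_symm_apply] using hA.eigenvalues_nonneg (e.symm i)
  rw [sum_filter_of_ne (p := fun i : Fin k => (i : ℕ) ≠ 0)
      fun i _ h hi => h (by simp [hσ_zero i hi]),
    ← e.sum_comp (fun i => (σ i)⁻¹)]
  simp only [hσ]

noncomputable def meanProj (V : Type*) [Fintype V] : Matrix V V ℝ :=
  ((Fintype.card V : ℝ))⁻¹ • Matrix.of (fun _ _ : V => (1 : ℝ))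

section MeanProj

variable {V : Type*} [Fintype V]

theorem meanProj_isSymm : (meanProj V).IsSymm := by
  ext u v
  simp [meanProj]

theorem mul_meanProj_apply {m : Type*} (N : Matrix m V ℝ) (u : m) (w : V) :
    (N * meanProj V) u w = (Fintype.card V : ℝ)⁻¹ * ∑ v, N u v := by
  simp only [meanProj, smul_of, mul_apply, of_apply, Pi.smul_apply, smul_eq_mul, mul_one]
  rw [mul_comm, sum_mul]

theorem meanProj_mul_apply {m : Type*} (N : Matrix V m ℝ) (w : V) (u : m) :
    (meanProj V * N) w u = (Fintype.card V : ℝ)⁻¹ * ∑ v, N v u := by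
  simp [meanProj, mul_apply, mul_sum]

theorem meanProj_mulVec (x : V → ℝ) :
    meanProj V *ᵥ x = fun _ => (Fintype.card V : ℝ)⁻¹ * ∑ v, x v := by
  ext u
  simp [meanProj, mulVec, dotProduct, mul_sum]

variable [Nonempty V]

theorem meanProj_mul_self : meanProj V * meanProj V = meanProj V := by
  ext u w
  rw [mul_meanProj_apply]
  simp [meanProj]

theorem meanProj_mulVec_const (c : ℝ) : meanProj V *ᵥ (fun _ => c) = fun _ => c := by
  simp [meanProj_mulVec]

theorem sum_apply_eq_zero_of_mul_meanProj_eq_zero {N : Matrix V V ℝ}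
    (hN : N * meanProj V = 0) (u : V) : ∑ v, N u v = 0 := by
  simpa [mul_meanProj_apply] using congrFun (congrFun hN u) u

theorem sum_apply_eq_zero_of_meanProj_mul_eq_zero {N : Matrix V V ℝ}
    (hN : meanProj V * N = 0) (u : V) : ∑ v, N v u = 0 := by
  simpa [meanProj_mul_apply] using congrFun (congrFun hN u) u

end MeanProj

namespace SimpleGraph

variable {V : Type*} [Fintype V] [DecidableEq V] {G : SimpleGraph V} [DecidableRel G.Adj]

variable (G) in
theorem lapMatrix_mul_meanProj : G.lapMatrix ℝ * meanProj V = 0 := by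
  ext u w
  have hrow := congrFun (G.lapMatrix_mulVec_const_eq_zero (R := ℝ)) u
  simp only [mulVec, dotProduct, mul_one, Pi.zero_apply] at hrow
  rw [mul_meanProj_apply, hrow, mul_zero, Matrix.zero_apply]

variable (G) in
theorem meanProj_mul_lapMatrix : meanProj V * G.lapMatrix ℝ = 0 := by
  rw [← meanProj_isSymm.eq, ← (G.isSymm_lapMatrix (R := ℝ)).eq, ← transpose_mul,
    lapMatrix_mul_meanProj, transpose_zero]

theorem Connected.isMoorePenrose_lapMatrix (hG : G.Connected) :
    IsMoorePenrose (G.lapMatrix ℝ) ((G.lapMatrix ℝ + meanProj V)⁻¹ - meanProj V) := by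
  have := hG.nonempty
  refine isMoorePenrose_inv_add_sub meanProj_isSymm meanProj_mul_self
    (lapMatrix_mul_meanProj G) (meanProj_mul_lapMatrix G) ?_
  refine isUnit_add_of_forall_mulVec_eq_zero (meanProj_mul_lapMatrix G) meanProj_mul_self
    fun x hx => ?_
  obtain ⟨u⟩ := hG.nonempty
  have hconst : x = fun _ => x u := funext fun v =>
    lapMatrix_mulVec_eq_zero_iff_forall_reachable G |>.mp hx v u (hG.preconnected v u)
  rw [hconst, meanProj_mulVec_const]

theorem Connected.effRes_eq (hG : G.Connected) {M : Matrix V V ℝ}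
    (hM : IsMoorePenrose (G.lapMatrix ℝ) M) (u v : V) :
    effRes G u v = M u u - M u v - M v u + M v v := by
  have hinv : (G.lapMatrix ℝ + meanProj V)⁻¹ = M + meanProj V := by
    rw [hM.unique hG.isMoorePenrose_lapMatrix, sub_add_cancel]
  have hP : meanProj V *ᵥ (Pi.single u 1 - Pi.single v 1) = 0 := by
    ext
    simp [meanProj_mulVec]
  change _ ⬝ᵥ ((G.lapMatrix ℝ + meanProj V)⁻¹ *ᵥ _) = _
  rw [hinv, add_mulVec, hP, add_zero, single_sub_single_dotProduct_mulVec]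

theorem Connected.totalRes_eq (hG : G.Connected) {M : Matrix V V ℝ}
    (hM : IsMoorePenrose (G.lapMatrix ℝ) M) :
    totalRes G = Fintype.card V * M.trace := by
  have := hG.nonempty
  have hS := G.isSymm_lapMatrix (R := ℝ)
  have hrow := sum_apply_eq_zero_of_mul_meanProj_eq_zero
    (hM.mul_eq_zero_of_mul_eq_zero hS (lapMatrix_mul_meanProj G))
  have hcol := sum_apply_eq_zero_of_meanProj_mul_eq_zero
    (hM.mul_eq_zero_of_mul_eq_zero' hS (meanProj_mul_lapMatrix G))
  have hoffDiag : ∑ p ∈ univ.offDiag, effRes G p.1 p.2 = ∑ u, ∑ v, effRes G u v := by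
    rw [← sum_product']
    refine sum_subset (fun p _ => mem_product.mpr ⟨mem_univ _, mem_univ _⟩) fun p _ hp => ?_
    have hdiag : p.1 = p.2 := by simpa using hp
    simp [effRes, hdiag]
  rw [totalRes, hoffDiag]
  simp only [hG.effRes_eq hM]
  rw [sum_sum_sub_sub_add_eq_card_mul_trace M hrow hcol]
  ring

end SimpleGraph

theorem total_resistance_eq_trace_pinv_general {V : Type*} [Fintype V] [DecidableEq V]
    (G : SimpleGraph V) [DecidableRel G.Adj]
    (hconn : G.Connected)
    (hL : (G.lapMatrix ℝ).IsHermitian)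
    (σ : Fin (Fintype.card V) → ℝ) (hmono : Monotone σ)
    (e : V ≃ Fin (Fintype.card V)) (hσ : ∀ w : V, hL.eigenvalues w = σ (e w))
    (M : Matrix V V ℝ) (hM : IsMoorePenrose (G.lapMatrix ℝ) M) :
    totalRes G = (Fintype.card V : ℝ) * M.trace ∧
      (Fintype.card V : ℝ) * M.trace =
        (Fintype.card V : ℝ) *
          ∑ i ∈ Finset.univ.filter (fun i : Fin (Fintype.card V) => (i : ℕ) ≠ 0),
            (σ i)⁻¹ := by
  have := hconn.nonempty
  have hsing : ¬IsUnit (G.lapMatrix ℝ) := by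
    rw [isUnit_iff_isUnit_det, G.det_lapMatrix_eq_zero]
    exact not_isUnit_zero
  refine ⟨hconn.totalRes_eq hM, ?_⟩
  rw [hL.trace_eq_sum_inv_eigenvalues hM,
    (G.posSemidef_lapMatrix ℝ).sum_inv_eigenvalues_eq_sum_filter_ne_zero hsing σ hmono e hσ]

/-- for a connected graph `G` on `n` vertices with Laplacian `L` whose
eigenvalues listed in increasing order (with multiplicity) are `0 = σ₁ ≤ σ₂ ≤ … ≤ σₙ`
(encoded by a monotone `σ : Fin n → ℝ` that is a rearrangement of the eigenvalues of the
Hermitian matrix `L`), and `M` the Moore–Penrose pseudoinverse of `L`,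
`R_tot = n · tr(M) = n · Σ_{i=2}^{n} 1/σ_i`. -/
theorem total_resistance_eq_trace_pinv {V : Type*} [Fintype V] [DecidableEq V]
    (G : SimpleGraph V) [DecidableRel G.Adj]
    (hconn : G.Connected) (hcard : 2 ≤ Fintype.card V)
    (hL : (G.lapMatrix ℝ).IsHermitian)
    (σ : Fin (Fintype.card V) → ℝ) (hmono : Monotone σ)
    (e : V ≃ Fin (Fintype.card V)) (hσ : ∀ w : V, hL.eigenvalues w = σ (e w))
    (M : Matrix V V ℝ) (hM : IsMoorePenrose (G.lapMatrix ℝ) M) :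
    totalRes G = (Fintype.card V : ℝ) * M.trace ∧
      (Fintype.card V : ℝ) * M.trace =
        (Fintype.card V : ℝ) *
          ∑ i ∈ Finset.univ.filter (fun i : Fin (Fintype.card V) => (i : ℕ) ≠ 0),
            (σ i)⁻¹ :=
  total_resistance_eq_trace_pinv_general G hconn hL σ hmono e hσ M hM
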